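/- Let N ≥ 2, K > 0 and 0 < b ≤ 2/log N < K, set k_n = ⌊K n log n⌋ and c_{k_n} = C + a log n · N^{b log n} with C ≥ 0, a > 0. Consider the modified random graph on Ω_N in which each pair of distinct points at hierarchical distance j with k_n < j ≤ k_{n+1} is joined independently by an edge with probability c_{k_n}/N^{2 k_{n+1}}. Then percolation does not occur in this modified random graph. -/

import Mathlib

/-!
A first-moment argument. If `0` lies in an infinite cluster then, for every `n`, some open
edge joins the ball `B_{k_n}` to a point `y` outside it, with `k_m < d(0, y) ≤ k_{m+1}` for
some `m ≥ n`; since `d` is an ultrametric, `d(0, y)` is also the length of that edge. A union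
bound over at most `N^{k_n} · N^{k_{m+1}}` pairs bounds the probability of percolation by
`∑_{m ≥ n} c_{k_m} N^{k_n - k_{m+1}}`. As `k_{m+1} - k_m ≥ K log m - 1 → ∞` while
`c_{k_{m+1}} ≤ 8 c_{k_m}` (as `N^{b log 2} = 2^{b log N} ≤ 4`), the terms eventually halve, so the sum is
at most twice its first term, which is at most `2N (C + a log n · n^{b log N}) n^{-K log N}`
and tends to `0` because `b < K`.
-/

open MeasureTheory ProbabilityTheory Filter

/-- The hierarchical group of order `N`: sequences with values in `{0, ..., N-1}`
(encoded as `ZMod N`), all but finitely many entries zero, with componentwise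
addition mod `N`. -/
abbrev HierGroup (N : ℕ) := ℕ →₀ ZMod N

/-- The hierarchical distance: `0` if `x = y`, and otherwise the largest index
(counted starting from `1`) where `x` and `y` differ. -/
noncomputable def hdist {N : ℕ} (x y : HierGroup N) : ℕ :=
  (x - y).support.sup fun i => i + 1

lemma hdist_comm {N : ℕ} (x y : HierGroup N) : hdist x y = hdist y x := by
  unfold hdist
  rw [← neg_sub y x, Finsupp.support_neg]

/-- The random graph determined by an edge configuration `ω`:
`x` and `y` are adjacent iff they are distinct and the edge `s(x,y)` is open. -/
def graphOf {V : Type*} {Ω : Type*} (E : Sym2 V → Ω → Bool) (ω : Ω) : SimpleGraph V where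
  Adj x y := x ≠ y ∧ E s(x, y) ω = true
  symm := by
    constructor
    intro x y h
    refine ⟨h.1.symm, ?_⟩
    rw [Sym2.eq_swap]
    exact h.2
  loopless := ⟨fun x h => h.1 rfl⟩

/-- `x` lies in an infinite cluster (connected component) of `G`. -/
def InInfiniteCluster {V : Type*} (G : SimpleGraph V) (x : V) : Prop :=
  {y | G.Reachable x y}.Infinite

/-- `G` has exactly one infinite connected component. -/
def UniqueInfiniteCluster {V : Type*} (G : SimpleGraph V) : Prop :=
  ∃! S : Set V, (∃ x, S = {y | G.Reachable x y}) ∧ S.Infinite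

/-- The edge probabilities of the hierarchical random graph `G_N`: two distinct
points at hierarchical distance `k` are joined with probability
`min (c k / N ^ (k * (1 + δ))) 1`. -/
def EdgeProbOK (N : ℕ) (δ : ℝ) (c : ℕ → ℝ) {Ω : Type*} [MeasurableSpace Ω]
    (μ : Measure Ω) (E : Sym2 (HierGroup N) → Ω → Bool) : Prop :=
  ∀ x y : HierGroup N, x ≠ y →
    μ {ω | E s(x, y) ω = true} =
      ENNReal.ofReal (min (c (hdist x y) / (N : ℝ) ^ ((hdist x y : ℝ) * (1 + δ))) 1)

/-- The `k`-ball containing `0` in the hierarchical group. -/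
def hball (N : ℕ) (k : ℕ) : Set (HierGroup N) := {y | hdist 0 y ≤ k}

/-- The `(j, l]`-annulus around `0` in the hierarchical group. -/
def hannulus (N : ℕ) (j l : ℕ) : Set (HierGroup N) :=
  {y | j < hdist 0 y ∧ hdist 0 y ≤ l}

/-- The restriction of a graph to a set `S` of vertices: only edges with both
endpoints in `S` are kept. -/
def restrictTo {V : Type*} (G : SimpleGraph V) (S : Set V) : SimpleGraph V where
  Adj a b := G.Adj a b ∧ a ∈ S ∧ b ∈ S
  symm := ⟨fun a b h => ⟨h.1.symm, h.2.2, h.2.1⟩⟩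
  loopless := ⟨fun a h => G.loopless.irrefl a h.1⟩

/-- The cluster of `x` inside the `k`-ball `B_k` containing `0`, using only
edges between points of `B_k`. -/
def clusterIn (N : ℕ) (G : SimpleGraph (HierGroup N)) (k : ℕ) (x : HierGroup N) :
    Set (HierGroup N) :=
  {y | (restrictTo G (hball N k)).Reachable x y}

/-- `S` is a largest cluster of the ball `B_k` containing `0` (in the graph `G`
restricted to `B_k`). -/
def IsLargestCluster (N : ℕ) (G : SimpleGraph (HierGroup N)) (k : ℕ)
    (S : Set (HierGroup N)) : Prop :=
  (∃ x ∈ hball N k, S = clusterIn N G k x) ∧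
    ∀ x ∈ hball N k, (clusterIn N G k x).ncard ≤ S.ncard

/-- The hierarchical scales `k_n = ⌊K n log n⌋`. -/
noncomputable def kseq (K : ℝ) (n : ℕ) : ℕ := ⌊K * n * Real.log n⌋₊


open Topology
open scoped ENNReal

section HierarchicalBalls

variable {N : ℕ}

lemma hdist_le_iff {x y : HierGroup N} {k : ℕ} : hdist x y ≤ k ↔ ∀ i, k ≤ i → x i = y i := by
  simp only [hdist, Finset.sup_le_iff, Finsupp.mem_support_iff, Finsupp.sub_apply, ne_eq,
    sub_eq_zero]
  exact forall_congr' fun i => by rw [← not_imp_not, not_not, not_le, Nat.lt_add_one_iff]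

lemma hdist_self (x : HierGroup N) : hdist x x = 0 :=
  Nat.le_zero.1 (hdist_le_iff.2 fun _ _ => rfl)

lemma hdist_le_max (x y z : HierGroup N) : hdist x z ≤ max (hdist x y) (hdist y z) :=
  hdist_le_iff.2 fun i hi =>
    (hdist_le_iff.1 le_rfl i ((le_max_left _ _).trans hi)).trans
      (hdist_le_iff.1 le_rfl i ((le_max_right _ _).trans hi))

lemma hdist_eq_of_hdist_lt {x y z : HierGroup N} (h : hdist z x < hdist z y) :
    hdist x y = hdist z y := by
  have h₁ := hdist_le_max x z y
  have h₂ := hdist_le_max z x y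
  rw [hdist_comm x z] at h₁
  omega

lemma zero_mem_hball (k : ℕ) : (0 : HierGroup N) ∈ hball N k := by
  simp [hball, hdist_self]

lemma hannulus_subset_hball (j l : ℕ) : hannulus N j l ⊆ hball N l := fun _ hy => hy.2

lemma injOn_hball_restrict (k : ℕ) :
    Set.InjOn (fun (y : HierGroup N) (i : Fin k) => y i) (hball N k) := by
  intro y hy z hz hyz
  ext i
  rcases lt_or_ge i k with hi | hi
  · exact congrFun hyz ⟨i, hi⟩
  · simpa using (hdist_le_iff.1 hy i hi).symm.trans (hdist_le_iff.1 hz i hi)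

variable [NeZero N]

lemma hball_finite (k : ℕ) : (hball N k).Finite :=
  Set.Finite.of_injOn (Set.mapsTo_univ _ _) (injOn_hball_restrict k) Set.finite_univ

lemma ncard_hball_le (k : ℕ) : (hball N k).ncard ≤ N ^ k :=
  (Set.ncard_le_ncard_of_injOn _ (fun _ _ => Set.mem_univ _) (injOn_hball_restrict k)
    Set.finite_univ).trans_eq (by simp [Set.ncard_univ])

lemma ncard_hannulus_le (j l : ℕ) : (hannulus N j l).ncard ≤ N ^ l :=
  (Set.ncard_le_ncard (hannulus_subset_hball j l) (hball_finite l)).trans (ncard_hball_le l)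

end HierarchicalBalls

lemma InInfiniteCluster.exists_adj_mem_notMem {V : Type*} {G : SimpleGraph V} {x : V}
    {S : Set V} (h : InInfiniteCluster G x) (hS : S.Finite) (hx : x ∈ S) :
    ∃ a ∈ S, ∃ b ∉ S, G.Adj a b := by
  obtain ⟨y, ⟨p⟩, hy⟩ := Set.Infinite.exists_notMem_finite h hS
  obtain ⟨d, -, hd₁, hd₂⟩ := p.exists_boundary_dart S hx hy
  exact ⟨d.fst, hd₁, d.snd, hd₂, d.adj⟩

lemma exists_le_lt_le_succ_of_tendsto {k : ℕ → ℕ} (hk : Tendsto k atTop atTop) {n d : ℕ}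
    (hd : k n < d) : ∃ m, n ≤ m ∧ k m < d ∧ d ≤ k (m + 1) := by
  by_contra! h
  have hlt : ∀ m, n ≤ m → k m < d := Nat.le_induction hd h
  obtain ⟨m, hdm, hnm⟩ := ((hk.eventually_ge_atTop d).and (eventually_ge_atTop n)).exists
  exact (hlt m hnm).not_ge hdm

lemma InInfiniteCluster.exists_adj_hball_hannulus {N : ℕ} [NeZero N]
    {G : SimpleGraph (HierGroup N)} (h : InInfiniteCluster G 0) {k : ℕ → ℕ}
    (hk : Tendsto k atTop atTop) (n : ℕ) :
    ∃ m, n ≤ m ∧ ∃ x ∈ hball N (k n), ∃ y ∈ hannulus N (k m) (k (m + 1)), G.Adj x y := by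
  obtain ⟨x, hx, y, hy, hxy⟩ := h.exists_adj_mem_notMem (hball_finite (k n)) (zero_mem_hball _)
  obtain ⟨m, hnm, hm⟩ := exists_le_lt_le_succ_of_tendsto hk (not_le.1 hy)
  exact ⟨m, hnm, x, hx, y, hm, hxy⟩

lemma MeasureTheory.measure_biUnion_le_ncard_mul {ι Ω : Type*} [MeasurableSpace Ω]
    (μ : Measure Ω) {s : Set ι} (hs : s.Finite) {f : ι → Set Ω} {p : ℝ≥0∞}
    (h : ∀ i ∈ s, μ (f i) ≤ p) : μ (⋃ i ∈ s, f i) ≤ s.ncard * p := by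
  rw [← hs.coe_toFinset, Set.ncard_coe_finset, ← nsmul_eq_mul]
  exact (measure_biUnion_finset_le _ _).trans
    (Finset.sum_le_card_nsmul _ _ _ fun i hi => h i (hs.mem_toFinset.1 hi))

lemma natCast_pow_mul_natCast_pow_mul_ofReal_div (N a b : ℕ) (q : ℝ) :
    (N : ℝ≥0∞) ^ a * ((N : ℝ≥0∞) ^ b * ENNReal.ofReal (q / (N : ℝ) ^ (2 * b))) =
      ENNReal.ofReal ((N : ℝ) ^ a * q / (N : ℝ) ^ b) := by
  simp only [← ENNReal.ofReal_natCast, ← ENNReal.ofReal_pow (Nat.cast_nonneg N)]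
  rw [← ENNReal.ofReal_mul (by positivity), ← ENNReal.ofReal_mul (by positivity)]
  congr 1
  rw [pow_mul', sq]
  field_simp

section FirstMoment

variable {N : ℕ} [NeZero N] {Ω : Type*} [MeasurableSpace Ω] (μ : Measure Ω)
  (E : Sym2 (HierGroup N) → Ω → Bool) {k : ℕ → ℕ}

lemma measure_biUnion_hball_hannulus_le (hk : Monotone k) {n m : ℕ} (hnm : n ≤ m) {q : ℝ}
    (hq : ∀ x y : HierGroup N, x ≠ y → k m < hdist x y → hdist x y ≤ k (m + 1) →
      μ {ω | E s(x, y) ω = true} ≤ ENNReal.ofReal (q / (N : ℝ) ^ (2 * k (m + 1)))) :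
    μ (⋃ x ∈ hball N (k n), ⋃ y ∈ hannulus N (k m) (k (m + 1)), {ω | E s(x, y) ω = true}) ≤
      ENNReal.ofReal ((N : ℝ) ^ k n * q / (N : ℝ) ^ k (m + 1)) := by
  have hedge : ∀ x ∈ hball N (k n), ∀ y ∈ hannulus N (k m) (k (m + 1)),
      μ {ω | E s(x, y) ω = true} ≤ ENNReal.ofReal (q / (N : ℝ) ^ (2 * k (m + 1))) := by
    rintro x hx y ⟨hy₁, hy₂⟩
    have hlt : hdist 0 x < hdist 0 y := (hx.trans (hk hnm)).trans_lt hy₁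
    have hxy : hdist x y = hdist 0 y := hdist_eq_of_hdist_lt hlt
    exact hq x y (by rintro rfl; exact hlt.false) (hxy ▸ hy₁) (hxy ▸ hy₂)
  calc _ ≤ (hball N (k n)).ncard * ((hannulus N (k m) (k (m + 1))).ncard *
        ENNReal.ofReal (q / (N : ℝ) ^ (2 * k (m + 1)))) :=
        measure_biUnion_le_ncard_mul μ (hball_finite _) fun x hx =>
          measure_biUnion_le_ncard_mul μ ((hball_finite _).subset (hannulus_subset_hball _ _))
            (hedge x hx)
    _ ≤ (N : ℝ≥0∞) ^ k n * ((N : ℝ≥0∞) ^ k (m + 1) *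
        ENNReal.ofReal (q / (N : ℝ) ^ (2 * k (m + 1)))) := by
      gcongr
      · exact_mod_cast ncard_hball_le _
      · exact_mod_cast ncard_hannulus_le _ _
    _ = _ := natCast_pow_mul_natCast_pow_mul_ofReal_div N _ _ q

theorem measure_inInfiniteCluster_le_tsum (hk_mono : Monotone k) (hk : Tendsto k atTop atTop)
    (q : ℕ → ℝ) (n : ℕ)
    (hq : ∀ m, n ≤ m → ∀ x y : HierGroup N, x ≠ y → k m < hdist x y → hdist x y ≤ k (m + 1) →
      μ {ω | E s(x, y) ω = true} ≤ ENNReal.ofReal (q m / (N : ℝ) ^ (2 * k (m + 1)))) :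
    μ {ω | InInfiniteCluster (graphOf E ω) 0} ≤
      ∑' j, ENNReal.ofReal ((N : ℝ) ^ k n * q (n + j) / (N : ℝ) ^ k (n + j + 1)) := by
  have hsub : {ω | InInfiniteCluster (graphOf E ω) 0} ⊆ ⋃ j, ⋃ x ∈ hball N (k n),
      ⋃ y ∈ hannulus N (k (n + j)) (k (n + j + 1)), {ω | E s(x, y) ω = true} := by
    intro ω hω
    obtain ⟨m, hnm, x, hx, y, hy, hxy⟩ := InInfiniteCluster.exists_adj_hball_hannulus hω hk n
    obtain ⟨j, rfl⟩ := Nat.exists_eq_add_of_le hnm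
    simp only [Set.mem_iUnion]
    exact ⟨j, x, hx, y, hy, hxy.2⟩
  exact (measure_mono hsub).trans <| (measure_iUnion_le _).trans <| ENNReal.tsum_le_tsum fun j =>
    measure_biUnion_hball_hannulus_le μ E hk_mono (Nat.le_add_right n j)
      (hq (n + j) (Nat.le_add_right n j))

end FirstMoment

section Scales

lemma monotone_log_natCast : Monotone fun n : ℕ => Real.log n := fun m n hmn => by
  rcases m.eq_zero_or_pos with rfl | hm
  · simpa using Real.log_natCast_nonneg n
  · exact Real.log_le_log (by positivity) (by exact_mod_cast hmn)

variable {K : ℝ}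

lemma kseq_mono (hK : 0 ≤ K) : Monotone (kseq K) := fun m n hmn =>
  Nat.floor_mono <| mul_le_mul (by gcongr) (monotone_log_natCast hmn)
    (Real.log_natCast_nonneg m) (by positivity)

lemma tendsto_kseq (hK : 0 < K) : Tendsto (kseq K) atTop atTop :=
  tendsto_nat_floor_atTop.comp <|
    (tendsto_natCast_atTop_atTop.const_mul_atTop hK).atTop_mul_atTop₀
      (Real.tendsto_log_atTop.comp tendsto_natCast_atTop_atTop)

lemma mul_log_sub_one_le_kseq_succ_sub (hK : 0 ≤ K) (n : ℕ) :
    K * Real.log n - 1 ≤ (kseq K (n + 1) : ℝ) - kseq K n := by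
  have hsucc : K * (n + 1) * Real.log (n + 1) - 1 < kseq K (n + 1) := by
    simpa [kseq] using Nat.sub_one_lt_floor (K * (n + 1) * Real.log (n + 1))
  have hle : (kseq K n : ℝ) ≤ K * n * Real.log n := Nat.floor_le (by positivity)
  have hlog : Real.log n ≤ Real.log (n + 1) := by exact_mod_cast monotone_log_natCast n.le_succ
  nlinarith [mul_nonneg (mul_nonneg hK (by positivity : (0 : ℝ) ≤ n + 1)) (sub_nonneg.2 hlog)]

lemma eventually_kseq_add_four_le (hK : 0 < K) :
    ∀ᶠ m in atTop, kseq K m + 4 ≤ kseq K (m + 1) := by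
  have hlog : ∀ᶠ m : ℕ in atTop, 5 / K ≤ Real.log m :=
    (Real.tendsto_log_atTop.comp tendsto_natCast_atTop_atTop).eventually_ge_atTop _
  filter_upwards [hlog] with m hm
  have h5 : 5 ≤ K * Real.log m := by rwa [div_le_iff₀' hK] at hm
  have := mul_log_sub_one_le_kseq_succ_sub hK.le m
  exact_mod_cast (by linarith : (kseq K m : ℝ) + 4 ≤ kseq K (m + 1))

end Scales

lemma Real.rpow_mul_log_comm {x y : ℝ} (hx : 0 < x) (hy : 0 < y) (t : ℝ) :
    x ^ (t * Real.log y) = y ^ (t * Real.log x) := by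
  rw [Real.rpow_def_of_pos hx, Real.rpow_def_of_pos hy]
  ring_nf

lemma tendsto_log_mul_rpow_neg_atTop {t : ℝ} (ht : 0 < t) :
    Tendsto (fun x : ℝ => Real.log x * x ^ (-t)) atTop (𝓝 0) :=
  (isLittleO_log_rpow_atTop ht).tendsto_div_nhds_zero.congr' <| by
    filter_upwards [eventually_ge_atTop 0] with x hx
    rw [Real.rpow_neg hx, div_eq_mul_inv]

/-- The numerator `c_{k_n} = C + a log n · N^{b log n}` of the edge probabilities at
scale `n`. -/
noncomputable def scaleWeight (N : ℕ) (b C a : ℝ) (n : ℕ) : ℝ :=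
  C + a * Real.log n * (N : ℝ) ^ (b * Real.log n)

section ScaleWeight

variable {N : ℕ} {b C a : ℝ}

lemma scaleWeight_nonneg (hC : 0 ≤ C) (ha : 0 ≤ a) (n : ℕ) : 0 ≤ scaleWeight N b C a n := by
  unfold scaleWeight
  positivity

lemma scaleWeight_succ_le (hN : 0 < N) (hb : 0 ≤ b) (hbN : b * Real.log N ≤ 2) (hC : 0 ≤ C)
    (ha : 0 ≤ a) {m : ℕ} (hm : 2 ≤ m) :
    scaleWeight N b C a (m + 1) ≤ 8 * scaleWeight N b C a m := by
  have hm₀ : (0 : ℝ) < m := by positivity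
  have hm₂ : (2 : ℝ) ≤ m := by exact_mod_cast hm
  have hlog : Real.log (m + 1 : ℕ) ≤ 2 * Real.log m :=
    calc Real.log (m + 1 : ℕ) ≤ Real.log ((m : ℝ) ^ 2) :=
          Real.log_le_log (by positivity) (by push_cast; nlinarith)
      _ = 2 * Real.log m := by rw [Real.log_pow, Nat.cast_ofNat]
  have hpow : (N : ℝ) ^ (b * Real.log (m + 1 : ℕ)) ≤ 4 * (N : ℝ) ^ (b * Real.log m) := by
    rw [Real.rpow_mul_log_comm (by positivity) (by positivity),
      Real.rpow_mul_log_comm (by positivity) hm₀]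
    calc ((m + 1 : ℕ) : ℝ) ^ (b * Real.log N) ≤ (2 * m) ^ (b * Real.log N) := by
          gcongr
          push_cast
          linarith
      _ = 2 ^ (b * Real.log N) * (m : ℝ) ^ (b * Real.log N) := Real.mul_rpow zero_le_two hm₀.le
      _ ≤ 2 ^ (2 : ℝ) * (m : ℝ) ^ (b * Real.log N) :=
          mul_le_mul_of_nonneg_right (Real.rpow_le_rpow_of_exponent_le one_le_two hbN)
            (by positivity)
      _ = 4 * (m : ℝ) ^ (b * Real.log N) := by norm_num
  calc scaleWeight N b C a (m + 1)
      ≤ C + a * (2 * Real.log m) * (4 * (N : ℝ) ^ (b * Real.log m)) := by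
        unfold scaleWeight
        gcongr
    _ ≤ 8 * scaleWeight N b C a m := by
        unfold scaleWeight
        linarith

lemma tendsto_scaleWeight_mul_rpow_neg {K : ℝ} (hN : 1 < N) (hK : 0 < K) (hbK : b < K) :
    Tendsto (fun n : ℕ => scaleWeight N b C a n * (N : ℝ) ^ (-(K * Real.log n))) atTop (𝓝 0) := by
  have hN₀ : (0 : ℝ) < N := by positivity
  have hlogN : 0 < Real.log N := Real.log_pos (by exact_mod_cast hN)
  have hpow : Tendsto (fun n : ℕ => (n : ℝ) ^ (-(K * Real.log N))) atTop (𝓝 0) :=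
    (tendsto_rpow_neg_atTop (by positivity)).comp tendsto_natCast_atTop_atTop
  have hlogpow :
      Tendsto (fun n : ℕ => Real.log n * (n : ℝ) ^ (-((K - b) * Real.log N))) atTop (𝓝 0) :=
    (tendsto_log_mul_rpow_neg_atTop (mul_pos (sub_pos.2 hbK) hlogN)).comp
      tendsto_natCast_atTop_atTop
  refine ((hpow.const_mul C).add (hlogpow.const_mul a)).congr' ?_ |>.trans (by simp)
  filter_upwards [eventually_gt_atTop 0] with n hn
  have hn₀ : (0 : ℝ) < n := by exact_mod_cast hn
  have hswap : (N : ℝ) ^ (-(K * Real.log n)) = (n : ℝ) ^ (-(K * Real.log N)) := by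
    rw [← neg_mul, Real.rpow_mul_log_comm hN₀ hn₀, neg_mul]
  have hexp : (n : ℝ) ^ (b * Real.log N) * (n : ℝ) ^ (-(K * Real.log N)) =
      (n : ℝ) ^ (-((K - b) * Real.log N)) := by
    rw [← Real.rpow_add hn₀]
    ring_nf
  simp only [scaleWeight]
  rw [hswap, Real.rpow_mul_log_comm hN₀ hn₀]
  linear_combination -(a * Real.log n) * hexp

lemma ENNReal.tsum_le_of_succ_le_mul {f : ℕ → ℝ≥0∞} {r : ℝ≥0∞} (h : ∀ j, f (j + 1) ≤ r * f j) :
    ∑' j, f j ≤ f 0 * (1 - r)⁻¹ := by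
  have hgeom : ∀ j, f j ≤ r ^ j * f 0 := by
    intro j
    induction j with
    | zero => simp
    | succ j ih =>
      calc f (j + 1) ≤ r * (r ^ j * f 0) := (h j).trans (by gcongr)
        _ = r ^ (j + 1) * f 0 := by ring
  calc ∑' j, f j ≤ ∑' j, r ^ j * f 0 := ENNReal.tsum_le_tsum hgeom
    _ = f 0 * (1 - r)⁻¹ := by rw [ENNReal.tsum_mul_right, ENNReal.tsum_geometric, mul_comm]

section ModifiedModel

variable {N : ℕ} {K b C a : ℝ}

lemma eventually_scaleWeight_div_succ_le (hN : 2 ≤ N) (hK : 0 < K) (hb : 0 ≤ b)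
    (hbN : b * Real.log N ≤ 2) (hC : 0 ≤ C) (ha : 0 ≤ a) :
    ∀ᶠ m in atTop, scaleWeight N b C a (m + 1) / (N : ℝ) ^ kseq K (m + 1 + 1) ≤
      2⁻¹ * (scaleWeight N b C a m / (N : ℝ) ^ kseq K (m + 1)) := by
  filter_upwards [eventually_ge_atTop 2,
    (tendsto_add_atTop_nat 1).eventually (eventually_kseq_add_four_le hK)] with m hm hk
  have hN' : (2 : ℝ) ≤ N := by exact_mod_cast hN
  have hden : (N : ℝ) ^ kseq K (m + 1) * 2 ^ 4 ≤ (N : ℝ) ^ kseq K (m + 1 + 1) :=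
    calc (N : ℝ) ^ kseq K (m + 1) * 2 ^ 4 ≤ (N : ℝ) ^ (kseq K (m + 1) + 4) := by
          rw [pow_add]
          gcongr
      _ ≤ (N : ℝ) ^ kseq K (m + 1 + 1) := pow_le_pow_right₀ (by linarith) hk
  calc scaleWeight N b C a (m + 1) / (N : ℝ) ^ kseq K (m + 1 + 1)
      ≤ 8 * scaleWeight N b C a m / ((N : ℝ) ^ kseq K (m + 1) * 2 ^ 4) :=
        div_le_div₀ (by have := scaleWeight_nonneg (N := N) (b := b) hC ha m; positivity)
          (scaleWeight_succ_le (by omega) hb hbN hC ha hm) (by positivity) hden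
    _ = 2⁻¹ * (scaleWeight N b C a m / (N : ℝ) ^ kseq K (m + 1)) := by
        field_simp
        ring

lemma tendsto_pow_kseq_mul_scaleWeight_div (hN : 1 < N) (hK : 0 < K) (hbK : b < K)
    (hC : 0 ≤ C) (ha : 0 ≤ a) :
    Tendsto (fun n => (N : ℝ) ^ kseq K n * scaleWeight N b C a n / (N : ℝ) ^ kseq K (n + 1))
      atTop (𝓝 0) := by
  have hN₁ : (1 : ℝ) ≤ N := by exact_mod_cast hN.le
  have hN₀ : (0 : ℝ) < N := by positivity
  have hratio : ∀ n : ℕ, (N : ℝ) ^ kseq K n / (N : ℝ) ^ kseq K (n + 1) ≤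
      N * (N : ℝ) ^ (-(K * Real.log n)) := by
    intro n
    rw [← Real.rpow_natCast, ← Real.rpow_natCast, ← Real.rpow_sub hN₀]
    nth_rw 2 [← Real.rpow_one (N : ℝ)]
    rw [← Real.rpow_add hN₀]
    exact Real.rpow_le_rpow_of_exponent_le hN₁
      (by linarith [mul_log_sub_one_le_kseq_succ_sub hK.le n])
  have hlim := (tendsto_scaleWeight_mul_rpow_neg (C := C) (a := a) hN hK hbK).const_mul (N : ℝ)
  rw [mul_zero] at hlim
  refine squeeze_zero (fun n => div_nonneg (mul_nonneg (by positivity)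
    (scaleWeight_nonneg hC ha n)) (by positivity)) (fun n => ?_) hlim
  calc (N : ℝ) ^ kseq K n * scaleWeight N b C a n / (N : ℝ) ^ kseq K (n + 1)
      = scaleWeight N b C a n * ((N : ℝ) ^ kseq K n / (N : ℝ) ^ kseq K (n + 1)) := by ring
    _ ≤ scaleWeight N b C a n * (N * (N : ℝ) ^ (-(K * Real.log n))) :=
        mul_le_mul_of_nonneg_left (hratio n) (scaleWeight_nonneg hC ha n)
    _ = N * (scaleWeight N b C a n * (N : ℝ) ^ (-(K * Real.log n))) := by ring

lemma tendsto_tsum_ofReal_pow_kseq_mul_scaleWeight_div (hN : 2 ≤ N) (hK : 0 < K) (hb : 0 ≤ b)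
    (hbN : b * Real.log N ≤ 2) (hbK : b < K) (hC : 0 ≤ C) (ha : 0 ≤ a) :
    Tendsto (fun n => ∑' j, ENNReal.ofReal
      ((N : ℝ) ^ kseq K n * scaleWeight N b C a (n + j) / (N : ℝ) ^ kseq K (n + j + 1)))
      atTop (𝓝 0) := by
  obtain ⟨n₀, hn₀⟩ := eventually_atTop.1 (eventually_scaleWeight_div_succ_le hN hK hb hbN hC ha)
  have hlim := ENNReal.tendsto_ofReal
    ((tendsto_pow_kseq_mul_scaleWeight_div (N := N) (by omega) hK hbK hC ha).mul_const 2)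
  have hhalf : (2⁻¹ : ℝ≥0∞) = ENNReal.ofReal 2⁻¹ := by
    rw [ENNReal.ofReal_inv_of_pos two_pos, ENNReal.ofReal_ofNat]
  refine tendsto_of_tendsto_of_tendsto_of_le_of_le' tendsto_const_nhds (by simpa using hlim)
    (Eventually.of_forall fun _ => zero_le) ?_
  filter_upwards [eventually_ge_atTop n₀] with n hn
  refine (ENNReal.tsum_le_of_succ_le_mul (r := 2⁻¹) fun j => ?_).trans_eq ?_
  · rw [hhalf, ← ENNReal.ofReal_mul (by norm_num), ← add_assoc, mul_div_assoc, mul_div_assoc,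
      mul_left_comm]
    exact ENNReal.ofReal_le_ofReal
      (mul_le_mul_of_nonneg_left (hn₀ (n + j) (by omega)) (by positivity))
  · have := scaleWeight_nonneg (N := N) (b := b) hC ha n
    rw [ENNReal.one_sub_inv_two, inv_inv, ENNReal.ofReal_mul (by positivity),
      ENNReal.ofReal_ofNat, add_zero]

end ModifiedModel

theorem modified_model_no_percolation_general
    (N : ℕ) (hN : 2 ≤ N) (K b C a : ℝ)
    (hb : 0 < b) (hb2 : b ≤ 2 / Real.log N) (hK : 2 / Real.log N < K)
    (hC : 0 ≤ C) (ha : 0 < a)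
    (Ω : Type) [MeasurableSpace Ω] (μ : Measure Ω)
    (E : Sym2 (HierGroup N) → Ω → Bool)
    (hprob : ∀ x y : HierGroup N, x ≠ y → ∀ n : ℕ, 1 ≤ n →
      kseq K n < hdist x y → hdist x y ≤ kseq K (n + 1) →
      μ {ω | E s(x, y) ω = true} =
        ENNReal.ofReal (min ((C + a * Real.log n * (N : ℝ) ^ (b * Real.log n)) /
          (N : ℝ) ^ (2 * kseq K (n + 1))) 1)) :
    μ {ω | InInfiniteCluster (graphOf E ω) 0} = 0 := by
  have : NeZero N := ⟨by omega⟩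
  have hlogN : 0 < Real.log N := Real.log_pos (by exact_mod_cast hN)
  have hbN : b * Real.log N ≤ 2 := (le_div_iff₀ hlogN).1 hb2
  have hbK : b < K := hb2.trans_lt hK
  have hK₀ : 0 < K := hb.trans hbK
  refine le_antisymm (ge_of_tendsto (tendsto_tsum_ofReal_pow_kseq_mul_scaleWeight_div hN hK₀
    hb.le hbN hbK hC ha.le) ?_) zero_le
  filter_upwards [eventually_ge_atTop 1] with n hn
  refine measure_inInfiniteCluster_le_tsum μ E (kseq_mono hK₀.le) (tendsto_kseq hK₀) _ n
    fun m hnm x y hxy hm₁ hm₂ => ?_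
  rw [hprob x y hxy m (hn.trans hnm) hm₁ hm₂]
  exact ENNReal.ofReal_le_ofReal (min_le_left _ _)

/-- The modified model in which pairs at distance `j ∈ (k_n, k_{n+1}]` are
joined with probability `c_{k_n} / N^{2 k_{n+1}}`, where
`c_{k_n} = C + a log n · N^{b log n}` and `0 < b ≤ 2 / log N < K`: percolation
does not occur. -/
theorem modified_model_no_percolation
    (N : ℕ) (hN : 2 ≤ N) (K b C a : ℝ)
    (hb : 0 < b) (hb2 : b ≤ 2 / Real.log N) (hK : 2 / Real.log N < K)
    (hC : 0 ≤ C) (ha : 0 < a)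
    (Ω : Type) [MeasurableSpace Ω] (μ : Measure Ω) [IsProbabilityMeasure μ]
    (E : Sym2 (HierGroup N) → Ω → Bool)
    (hE : ∀ e, Measurable (E e))
    (hind : iIndepFun E μ)
    (hprob : ∀ x y : HierGroup N, x ≠ y → ∀ n : ℕ, 1 ≤ n →
      kseq K n < hdist x y → hdist x y ≤ kseq K (n + 1) →
      μ {ω | E s(x, y) ω = true} =
        ENNReal.ofReal (min ((C + a * Real.log n * (N : ℝ) ^ (b * Real.log n)) /
          (N : ℝ) ^ (2 * kseq K (n + 1))) 1)) :
    μ {ω | InInfiniteCluster (graphOf E ω) 0} = 0 :=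
  modified_model_no_percolation_general N hN K b C a hb hb2 hK hC ha Ω μ E hprob
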